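/- Let k be a nonnegative integer. For every real t with |t| < 1, one has (1/k!) · (2 log(t/2 + √(1 + t²/4)))^k = ∑_{n=k}^{∞} t(n,k) · t^n / n!, the series converging to the left-hand side. -/

import Mathlib

open Polynomial

/-- The polynomial `X^{[n]}`: the central factorial polynomial, i.e.
`X^{[0]} = 1` and `X^{[n]} = X ∏_{i=1}^{n-1} (X + n/2 - i)` for `n ≥ 1`. -/
noncomputable def centralFactorialPoly : ℕ → Polynomial ℝ
  | 0 => 1
  | n + 1 => X * ∏ i ∈ Finset.range n, (X + C (((n : ℝ) + 1) / 2) - C ((i : ℝ) + 1))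

/-- The central factorial numbers of the first kind `t(n,k)`, defined as the coefficients
in `x^{[n]} = ∑_{k=0}^{n} t(n,k) x^k`. -/
noncomputable def centralt (n k : ℕ) : ℝ :=
  (centralFactorialPoly n).coeff k


lemma cfp_succ (n : ℕ) : centralFactorialPoly (n+1)
    = X * ∏ i ∈ Finset.range n, (X + C (((n : ℝ) + 1) / 2) - C ((i : ℝ) + 1)) := rfl
lemma cfp_zero : centralFactorialPoly 0 = 1 := rfl
lemma cfp_one : centralFactorialPoly 1 = X := by simp [cfp_succ]
lemma xcc (a b : ℝ) : X + C a - C b = X + C (a - b) := by rw [C_sub]; ring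

lemma cfp_two_step (n : ℕ) :
    centralFactorialPoly (n + 2) =
      centralFactorialPoly n * (X ^ 2 - C ((n : ℝ) ^ 2 / 4)) := by
  match n with
  | 0 =>
    rw [show (0+2 : ℕ) = 1+1 from rfl, cfp_succ, cfp_zero]
    norm_num [Finset.prod_range_one, xcc]
    ring
  | (m + 1) =>
    rw [show (m+1+2 : ℕ) = (m+2)+1 from rfl, cfp_succ, cfp_succ,
      Finset.prod_range_succ, Finset.prod_range_succ']
    simp only [xcc]
    have hprod : ∏ x ∈ Finset.range m, (X + C ((((m + 2:ℕ):ℝ) + 1) / 2 - (((x + 1:ℕ):ℝ) + 1)))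
        = ∏ x ∈ Finset.range m, (X + C ((((m:ℕ):ℝ) + 1) / 2 - (((x:ℕ):ℝ) + 1))) := by
      refine Finset.prod_congr rfl fun x _ => ?_
      congr 1
      push_cast; ring
    rw [hprod]
    have h0 : ((((m + 2:ℕ):ℝ) + 1) / 2 - (((0:ℕ):ℝ) + 1)) = ((m:ℝ)+1)/2 := by push_cast; ring
    have h1 : ((((m + 2:ℕ):ℝ) + 1) / 2 - (((m + 1:ℕ):ℝ) + 1)) = -(((m:ℝ)+1)/2) := by
      push_cast; ring
    rw [h0, h1]
    have hc : (((m+1 : ℕ) : ℝ) ^ 2 / 4) = (((m:ℝ)+1)/2)^2 := by push_cast; ring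
    rw [hc]
    have key : (X + C (((m:ℝ)+1)/2)) * (X + C (-(((m:ℝ)+1)/2))) = X^2 - C ((((m:ℝ)+1)/2)^2) := by
      rw [map_neg, C_pow]
      ring
    rw [← key]
    ring

lemma centralt_rec (n k : ℕ) :
    centralt (n+2) k = (if 2 ≤ k then centralt n (k-2) else 0)
      - (n:ℝ)^2/4 * centralt n k := by
  unfold centralt
  rw [cfp_two_step, mul_sub, coeff_sub, coeff_mul_X_pow', coeff_mul_C]
  ring

lemma natDegree_cfp_le (n : ℕ) : (centralFactorialPoly n).natDegree ≤ n := by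
  cases n with
  | zero => simp [cfp_zero]
  | succ m =>
    rw [cfp_succ]
    refine le_trans (natDegree_mul_le) ?_
    have h2 : (∏ i ∈ Finset.range m,
        (X + C (((m : ℝ) + 1) / 2) - C ((i : ℝ) + 1))).natDegree ≤ m := by
      refine le_trans (natDegree_prod_le _ _) ?_
      refine le_trans (Finset.sum_le_card_nsmul _ _ 1 fun i _ => ?_) (by simp)
      rw [xcc]
      exact le_of_eq (natDegree_X_add_C _)
    rw [natDegree_X, add_comm m 1]
    exact add_le_add (le_refl 1) h2

lemma centralt_eq_zero_of_lt {n k : ℕ} (h : n < k) : centralt n k = 0 :=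
  coeff_eq_zero_of_natDegree_lt (lt_of_le_of_lt (natDegree_cfp_le n) h)

lemma centralt_00 : centralt 0 0 = 1 := by simp [centralt, cfp_zero]
lemma centralt_0succ (k : ℕ) : centralt 0 (k+1) = 0 := by simp [centralt, cfp_zero, coeff_one]
lemma centralt_11 : centralt 1 1 = 1 := by simp [centralt, cfp_one]
lemma centralt_10 : centralt 1 0 = 0 := by simp [centralt, cfp_one]
lemma centralt_n0 (n : ℕ) : centralt (n+1) 0 = 0 := by
  unfold centralt
  rw [cfp_succ, mul_coeff_zero, coeff_X_zero, zero_mul]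


lemma centralt_abs_le : ∀ n k, |centralt n k| ≤ ((n:ℝ)+1) * n.factorial / 2^n
  | 0, k => by
    cases k with
    | zero => rw [centralt_00]; norm_num
    | succ m => rw [centralt_0succ]; norm_num
  | 1, k => by
    match k with
    | 0 => rw [centralt_10]; norm_num
    | 1 => rw [centralt_11]; norm_num
    | (m+2) => rw [centralt_eq_zero_of_lt (by omega)]; norm_num
  | (n+2), k => by
    have h1 := centralt_abs_le n k
    have habs : 0 ≤ |centralt n k| := abs_nonneg _
    have key : |centralt (n+2) k| ≤ (1 + (n:ℝ)^2/4) * (((n:ℝ)+1) * n.factorial / 2^n) := by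
      rw [centralt_rec]
      refine le_trans (abs_sub _ _) ?_
      have h2 : |if 2 ≤ k then centralt n (k-2) else 0| ≤ ((n:ℝ)+1) * n.factorial / 2^n := by
        split
        · exact centralt_abs_le n (k-2)
        · simp only [abs_zero]
          positivity
      have h3 : |(n:ℝ)^2/4 * centralt n k| ≤ (n:ℝ)^2/4 * (((n:ℝ)+1) * n.factorial / 2^n) := by
        rw [abs_mul, abs_of_nonneg (by positivity : (0:ℝ) ≤ (n:ℝ)^2/4)]
        exact mul_le_mul_of_nonneg_left h1 (by positivity)
      nlinarith [h2, h3]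
    refine le_trans key ?_
    have hfact : ((n+2 : ℕ).factorial : ℝ) = ((n:ℝ)+2) * ((n:ℝ)+1) * n.factorial := by
      rw [show n+2 = (n+1)+1 from rfl, Nat.factorial_succ, Nat.factorial_succ]
      push_cast; ring
    rw [hfact]
    have hf : (0:ℝ) < n.factorial := by positivity
    have h2n : (0:ℝ) < 2^n := by positivity
    rw [show ((n+2:ℕ):ℝ) = (n:ℝ)+2 by push_cast; ring]
    rw [show (2:ℝ)^(n+2) = 4 * 2^n by ring]
    have hn : (0:ℝ) ≤ n := Nat.cast_nonneg n
    rw [mul_div_assoc', div_le_div_iff₀ (by positivity) (by positivity)]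
    nlinarith [hf, h2n, hn, mul_pos hf h2n]


noncomputable def cN (k n : ℕ) : ℝ := centralt n k / n.factorial

noncomputable def Mser (n : ℕ) : ℝ := ((n:ℝ)+1)^3 * (5/8)^n

lemma cN_abs (k n : ℕ) : |cN k n| ≤ ((n:ℝ)+1) / 2^n := by
  unfold cN
  rw [abs_div, abs_of_nonneg (by positivity : (0:ℝ) ≤ (n.factorial : ℝ))]
  rw [div_le_div_iff₀ (by positivity) (by positivity)]
  have h := centralt_abs_le n k
  have h2 : (0:ℝ) < 2^n := by positivity
  have hf : (0:ℝ) < n.factorial := by positivity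
  exact (le_div_iff₀ h2).mp h

lemma summable_Mser : Summable Mser := by
  have hr : ‖(5/8 : ℝ)‖ < 1 := by
    rw [Real.norm_eq_abs, abs_of_nonneg (by norm_num : (0:ℝ) ≤ 5/8)]; norm_num
  have h3 := summable_pow_mul_geometric_of_norm_lt_one 3 hr (R := ℝ)
  have h2 := summable_pow_mul_geometric_of_norm_lt_one 2 hr (R := ℝ)
  have h1 := summable_pow_mul_geometric_of_norm_lt_one 1 hr (R := ℝ)
  have h0 := summable_pow_mul_geometric_of_norm_lt_one 0 hr (R := ℝ)
  refine (((h3.add (h2.mul_left 3)).add ((h1.mul_left 3).add h0)).congr ?_)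
  intro n
  unfold Mser
  ring

lemma term_bound (n : ℕ) (c b t : ℝ) (hc : |c| ≤ ((n:ℝ)+1)/2^n)
    (hb : |b| ≤ ((n:ℝ)+1)^2) (m : ℕ) (hm : m ≤ n) (ht : |t| ≤ 5/4) :
    |c * b * t^m| ≤ Mser n := by
  have hpow : |t|^m ≤ (5/4:ℝ)^n := by
    refine le_trans (pow_le_pow_left₀ (abs_nonneg t) ht m) ?_
    exact pow_le_pow_right₀ (by norm_num) hm
  rw [abs_mul, abs_mul, abs_pow]
  calc |c| * |b| * |t|^m ≤ (((n:ℝ)+1)/2^n) * (((n:ℝ)+1)^2) * (5/4)^n := by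
        have h1 : |c| * |b| ≤ (((n:ℝ)+1)/2^n) * (((n:ℝ)+1)^2) :=
          mul_le_mul hc hb (abs_nonneg b) (by positivity)
        exact mul_le_mul h1 hpow (by positivity) (by positivity)
    _ = Mser n := by
        unfold Mser
        have h58 : ((5:ℝ)/8)^n = (5/4)^n / 2^n := by rw [← div_pow]; norm_num
        rw [h58]
        ring

lemma b1_abs (n : ℕ) : |(n:ℝ)| ≤ ((n:ℝ)+1)^2 := by
  rw [abs_of_nonneg (Nat.cast_nonneg n)]
  nlinarith [Nat.cast_nonneg (α := ℝ) n]

lemma b2_abs (n : ℕ) : |(n:ℝ) * ((n-1:ℕ):ℝ)| ≤ ((n:ℝ)+1)^2 := by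
  have h1 : ((n-1:ℕ):ℝ) ≤ (n:ℝ) := Nat.cast_le.mpr (Nat.sub_le n 1)
  have h0 : (0:ℝ) ≤ ((n-1:ℕ):ℝ) := Nat.cast_nonneg _
  have hn : (0:ℝ) ≤ (n:ℝ) := Nat.cast_nonneg _
  rw [abs_of_nonneg (by positivity)]
  nlinarith

noncomputable def g0 (k n : ℕ) (t : ℝ) : ℝ := cN k n * t^n
noncomputable def g1 (k n : ℕ) (t : ℝ) : ℝ := cN k n * (n:ℝ) * t^(n-1)
noncomputable def g2 (k n : ℕ) (t : ℝ) : ℝ :=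
  cN k n * (n:ℝ) * ((n-1:ℕ):ℝ) * t^(n-1-1)

lemma one_abs_le (n : ℕ) : |(1:ℝ)| ≤ ((n:ℝ)+1)^2 := by
  rw [abs_one]; nlinarith [Nat.cast_nonneg (α := ℝ) n]

lemma g0_bound (k n : ℕ) {t : ℝ} (ht : |t| ≤ 5/4) : ‖g0 k n t‖ ≤ Mser n := by
  rw [Real.norm_eq_abs, g0, show cN k n * t^n = cN k n * 1 * t^n by ring]
  exact term_bound n _ 1 t (cN_abs k n) (one_abs_le n) n le_rfl ht

lemma g1_bound (k n : ℕ) {t : ℝ} (ht : |t| ≤ 5/4) : ‖g1 k n t‖ ≤ Mser n := by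
  rw [Real.norm_eq_abs, g1]
  exact term_bound n _ _ t (cN_abs k n) (b1_abs n) (n-1) (Nat.sub_le n 1) ht

lemma g2_bound (k n : ℕ) {t : ℝ} (ht : |t| ≤ 5/4) : ‖g2 k n t‖ ≤ Mser n := by
  rw [Real.norm_eq_abs, g2, mul_assoc (cN k n)]
  exact term_bound n _ _ t (cN_abs k n) (b2_abs n) (n-1-1)
    (le_trans (Nat.sub_le _ 1) (Nat.sub_le n 1)) ht

lemma summable_g0 (k : ℕ) {t : ℝ} (ht : |t| ≤ 5/4) : Summable (fun n => g0 k n t) :=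
  Summable.of_norm_bounded summable_Mser (fun n => g0_bound k n ht)
lemma summable_g1 (k : ℕ) {t : ℝ} (ht : |t| ≤ 5/4) : Summable (fun n => g1 k n t) :=
  Summable.of_norm_bounded summable_Mser (fun n => g1_bound k n ht)
lemma summable_g2 (k : ℕ) {t : ℝ} (ht : |t| ≤ 5/4) : Summable (fun n => g2 k n t) :=
  Summable.of_norm_bounded summable_Mser (fun n => g2_bound k n ht)

lemma hasDerivAt_g0 (k n : ℕ) (t : ℝ) : HasDerivAt (fun x => g0 k n x) (g1 k n t) t := by
  have h := (hasDerivAt_pow n t).const_mul (cN k n)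
  simpa only [g0, g1, ← mul_assoc] using h

lemma hasDerivAt_g1 (k n : ℕ) (t : ℝ) : HasDerivAt (fun x => g1 k n x) (g2 k n t) t := by
  have h := (hasDerivAt_pow (n-1) t).const_mul (cN k n * (n:ℝ))
  simpa only [g1, g2, ← mul_assoc] using h

noncomputable def S0 (k : ℕ) (t : ℝ) : ℝ := ∑' n, g0 k n t
noncomputable def S1 (k : ℕ) (t : ℝ) : ℝ := ∑' n, g1 k n t
noncomputable def S2 (k : ℕ) (t : ℝ) : ℝ := ∑' n, g2 k n t

def U : Set ℝ := Set.Ioo (-(5/4)) (5/4)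

lemma abs_le_of_mem_U {t : ℝ} (ht : t ∈ U) : |t| ≤ 5/4 := by
  rcases ht with ⟨h1, h2⟩
  rw [abs_le]; constructor <;> linarith

lemma zero_mem_U : (0:ℝ) ∈ U := by constructor <;> norm_num

lemma hasDerivAt_S0 (k : ℕ) {t : ℝ} (ht : t ∈ U) : HasDerivAt (S0 k) (S1 k t) t := by
  unfold S0 S1
  exact hasDerivAt_tsum_of_isPreconnected summable_Mser isOpen_Ioo
    (convex_Ioo _ _).isPreconnected
    (fun n y _ => hasDerivAt_g0 k n y)
    (fun n y hy => g1_bound k n (abs_le_of_mem_U hy))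
    zero_mem_U (summable_g0 k (by norm_num)) ht

lemma hasDerivAt_S1 (k : ℕ) {t : ℝ} (ht : t ∈ U) : HasDerivAt (S1 k) (S2 k t) t := by
  unfold S1 S2
  exact hasDerivAt_tsum_of_isPreconnected summable_Mser isOpen_Ioo
    (convex_Ioo _ _).isPreconnected
    (fun n y _ => hasDerivAt_g1 k n y)
    (fun n y hy => g2_bound k n (abs_le_of_mem_U hy))
    zero_mem_U (summable_g1 k (by norm_num)) ht


lemma combine_g (k n : ℕ) (t : ℝ) :
    (t^2/4) * g2 k n t + (t/4) * g1 k n t = ((n:ℝ)^2/4) * g0 k n t := by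
  match n with
  | 0 => simp [g0, g1, g2]
  | 1 => simp [g0, g1, g2]; ring
  | (m+2) =>
    unfold g0 g1 g2
    rw [show m+2-1 = m+1 from rfl, show m+1-1 = m from rfl]
    push_cast
    ring

lemma g2_shift (k m : ℕ) (t : ℝ) :
    g2 k (m+2) t = (centralt (m+2) k / m.factorial) * t^m := by
  unfold g2 cN
  rw [show m+2-1 = m+1 from rfl, show m+1-1 = m from rfl]
  have hf : ((m+2 : ℕ).factorial : ℝ) = ((m:ℝ)+2) * ((m:ℝ)+1) * m.factorial := by
    rw [show m+2 = (m+1)+1 from rfl, Nat.factorial_succ, Nat.factorial_succ]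
    push_cast; ring
  rw [hf]
  push_cast
  rw [div_mul_eq_mul_div, div_mul_eq_mul_div, div_mul_eq_mul_div, div_mul_eq_mul_div,
    div_eq_div_iff (by positivity) (by positivity)]
  ring

lemma g2_zero (k : ℕ) (t : ℝ) : g2 k 0 t = 0 := by simp [g2]
lemma g2_one (k : ℕ) (t : ℝ) : g2 k 1 t = 0 := by simp [g2]

lemma tsum_g2_eq (k : ℕ) {t : ℝ} (ht : |t| ≤ 5/4) :
    ∑' n, g2 k n t = ∑' n, (centralt (n+2) k / n.factorial) * t^n := by
  have hsum : Summable (fun n => g2 k (n+2) t) :=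
    (summable_nat_add_iff (f := fun n => g2 k n t) 2).mpr (summable_g2 k ht)
  have hs : HasSum (fun n => g2 k (n+2) t) (∑' n, g2 k (n+2) t) := hsum.hasSum
  have hs2 := (hasSum_nat_add_iff (f := fun n => g2 k n t) 2).mp hs
  have : ∑ i ∈ Finset.range 2, g2 k i t = 0 := by
    simp [Finset.sum_range_succ, g2_zero, g2_one]
  rw [this, add_zero] at hs2
  rw [hs2.tsum_eq]
  exact tsum_congr (fun n => g2_shift k n t)

lemma key_rec (k : ℕ) {t : ℝ} (ht : |t| ≤ 5/4) :
    (1 + t^2/4) * S2 k t + (t/4) * S1 k t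
      = ∑' (n:ℕ), ((centralt (n+2) k + (n:ℝ)^2/4 * centralt n k) * t^n / n.factorial) := by
  have sg0 := summable_g0 k ht
  have sg1 := summable_g1 k ht
  have sg2 := summable_g2 k ht
  have hmix : Summable (fun (n:ℕ) => ((n:ℝ)^2/4) * g0 k n t) := by
    refine ((sg2.mul_left (t^2/4)).add (sg1.mul_left (t/4))).congr (fun n => ?_)
    exact combine_g k n t
  have step1 : (1 + t^2/4) * S2 k t + (t/4) * S1 k t
      = ∑' n, g2 k n t + ∑' (n:ℕ), ((n:ℝ)^2/4) * g0 k n t := by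
    have e1 : ∑' (n:ℕ), ((n:ℝ)^2/4) * g0 k n t
        = (t^2/4) * S2 k t + (t/4) * S1 k t := by
      rw [← tsum_congr (fun n => combine_g k n t),
        Summable.tsum_add (sg2.mul_left (t^2/4)) (sg1.mul_left (t/4)),
        tsum_mul_left, tsum_mul_left]
      rfl
    rw [e1]
    unfold S2
    ring
  rw [step1, tsum_g2_eq k ht]
  have hsp : Summable (fun n => (centralt (n+2) k / n.factorial) * t^n) := by
    refine ((summable_nat_add_iff (f := fun n => g2 k n t) 2).mpr sg2).congr (fun n => ?_)
    exact g2_shift k n t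
  rw [← Summable.tsum_add hsp hmix]
  refine tsum_congr (fun n => ?_)
  unfold g0 cN
  field_simp


noncomputable def gq (t : ℝ) : ℝ := (Real.sqrt (1 + t^2/4))⁻¹
noncomputable def arc (t : ℝ) : ℝ := 2 * Real.log (t / 2 + Real.sqrt (1 + t ^ 2 / 4))

lemma sqrt_pos' (t : ℝ) : 0 < Real.sqrt (1 + t^2/4) :=
  Real.sqrt_pos.mpr (by positivity)

lemma gq_pos (t : ℝ) : 0 < gq t := inv_pos.mpr (sqrt_pos' t)

lemma hgq2 (t : ℝ) : (1 + t^2/4) * (gq t)^2 = 1 := by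
  unfold gq
  rw [inv_pow, Real.sq_sqrt (by positivity : (0:ℝ) ≤ 1 + t^2/4)]
  exact mul_inv_cancel₀ (by positivity)

lemma hasDerivAt_base (t : ℝ) : HasDerivAt (fun x : ℝ => 1 + x^2/4) (t/2) t := by
  have h := (((hasDerivAt_id t).pow 2).div_const 4).const_add 1
  refine h.congr_deriv ?_
  simp
  ring

lemma hasDerivAt_sqrtq (t : ℝ) :
    HasDerivAt (fun x : ℝ => Real.sqrt (1 + x^2/4)) ((t/4) * gq t) t := by
  have h := (Real.hasDerivAt_sqrt (by positivity : (1:ℝ) + t^2/4 ≠ 0)).comp t (hasDerivAt_base t)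
  refine h.congr_deriv ?_
  unfold gq
  have hs : Real.sqrt (1 + t^2/4) ≠ 0 := ne_of_gt (sqrt_pos' t)
  field_simp
  ring

lemma hasDerivAt_gq (t : ℝ) : HasDerivAt gq (-(t/4) * (gq t)^3) t := by
  have h := (hasDerivAt_sqrtq t).inv (ne_of_gt (sqrt_pos' t))
  have hfun : (fun x : ℝ => Real.sqrt (1 + x^2/4))⁻¹ = gq := rfl
  rw [hfun] at h
  refine h.congr_deriv ?_
  set s := Real.sqrt (1 + t^2/4) with hsdef
  have hs : s ≠ 0 := ne_of_gt (sqrt_pos' t)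
  have hg : gq t = s⁻¹ := rfl
  rw [hg]
  ring

lemma arc_eq_arsinh (t : ℝ) : arc t = 2 * Real.arsinh (t/2) := by
  unfold arc Real.arsinh
  congr 2
  rw [show (t/2)^2 = t^2/4 by ring]

lemma arc_zero : arc 0 = 0 := by
  rw [arc_eq_arsinh]
  simp [Real.arsinh_zero]

lemma hasDerivAt_arc (t : ℝ) : HasDerivAt arc (gq t) t := by
  have h1 : HasDerivAt (fun x : ℝ => x/2) ((1:ℝ)/2) t := (hasDerivAt_id t).div_const 2
  have h := ((Real.hasDerivAt_arsinh (t/2)).comp t h1).const_mul 2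
  have he : arc = fun x => 2 * Real.arsinh (x/2) := funext arc_eq_arsinh
  rw [he]
  refine h.congr_deriv ?_
  rw [show (t/2)^2 = t^2/4 by ring]
  unfold gq
  ring

lemma const_on_U {f f' : ℝ → ℝ} (hf : ∀ x ∈ U, HasDerivAt f (f' x) x)
    (hz : ∀ x ∈ U, f' x = 0) : ∀ x ∈ U, f x = f 0 := by
  intro x hx
  have hb := Convex.norm_image_sub_le_of_norm_hasDerivWithin_le (f := f) (f' := f') (C := 0)
    (fun y hy => (hf y hy).hasDerivWithinAt) (fun y hy => by rw [hz y hy]; simp)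
    (convex_Ioo _ _) zero_mem_U hx
  have h0 : ‖f x - f 0‖ ≤ 0 := by simpa using hb
  have := norm_nonneg (f x - f 0)
  have hh : f x - f 0 = 0 := by
    rw [← norm_eq_zero]; linarith
  linarith [sub_eq_zero.mp hh]

lemma ode_unique {y₁ y₂ d₁ d₂ e₁ e₂ : ℝ → ℝ}
    (h₁ : ∀ t ∈ U, HasDerivAt y₁ (d₁ t) t) (h₁' : ∀ t ∈ U, HasDerivAt d₁ (e₁ t) t)
    (h₂ : ∀ t ∈ U, HasDerivAt y₂ (d₂ t) t) (h₂' : ∀ t ∈ U, HasDerivAt d₂ (e₂ t) t)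
    (hode : ∀ t ∈ U, (1 + t^2/4) * e₁ t + (t/4) * d₁ t
      = (1 + t^2/4) * e₂ t + (t/4) * d₂ t)
    (h0 : y₁ 0 = y₂ 0) (h0' : d₁ 0 = d₂ 0) : ∀ t ∈ U, y₁ t = y₂ t := by
  have hdeq : ∀ t ∈ U, d₁ t = d₂ t := by
    set E : ℝ → ℝ := fun t => Real.sqrt (1 + t^2/4) * (d₁ t - d₂ t) with hE
    have hEd : ∀ t ∈ U, HasDerivAt E
        ((t/4) * gq t * (d₁ t - d₂ t) + Real.sqrt (1 + t^2/4) * (e₁ t - e₂ t)) t := by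
      intro t htU
      exact (hasDerivAt_sqrtq t).mul ((h₁' t htU).sub (h₂' t htU))
    have hEz : ∀ t ∈ U, (t/4) * gq t * (d₁ t - d₂ t)
        + Real.sqrt (1 + t^2/4) * (e₁ t - e₂ t) = 0 := by
      intro t htU
      have hs : Real.sqrt (1 + t^2/4) ≠ 0 := ne_of_gt (sqrt_pos' t)
      have hq : Real.sqrt (1 + t^2/4) ^ 2 = 1 + t^2/4 :=
        Real.sq_sqrt (by positivity)
      have ho := hode t htU
      have hgq : gq t = (Real.sqrt (1 + t^2/4))⁻¹ := rfl
      rw [hgq]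
      set s := Real.sqrt (1 + t^2/4) with hsdef
      have key : (t/4) * (d₁ t - d₂ t) + s^2 * (e₁ t - e₂ t) = 0 := by
        rw [hq]; linarith [ho]
      have hss : s * s⁻¹ = 1 := mul_inv_cancel₀ hs
      linear_combination s⁻¹ * key - s * (e₁ t - e₂ t) * hss
    intro t htU
    have hconst := const_on_U (f := E) (f' := fun _ => (0:ℝ))
      (fun x hx => by rw [← hEz x hx]; exact hEd x hx)
      (fun x _ => rfl) t htU
    have hE0 : E 0 = 0 := by
      simp only [hE]
      norm_num [Real.sqrt_one, h0']
    have hEt : Real.sqrt (1 + t^2/4) * (d₁ t - d₂ t) = 0 := by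
      have : E t = 0 := by rw [hconst, hE0]
      simpa [hE] using this
    have hs : Real.sqrt (1 + t^2/4) ≠ 0 := ne_of_gt (sqrt_pos' t)
    have := (mul_eq_zero.mp hEt).resolve_left hs
    linarith [this]
  intro t htU
  have hy := const_on_U (f := fun x => y₁ x - y₂ x) (f' := fun x => d₁ x - d₂ x)
    (fun x hx => (h₁ x hx).sub (h₂ x hx))
    (fun x hx => by show d₁ x - d₂ x = 0; rw [hdeq x hx]; ring) t htU
  have h00 : y₁ 0 - y₂ 0 = 0 := by rw [h0]; ring
  have hy' : y₁ t - y₂ t = y₁ 0 - y₂ 0 := hy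
  linarith [hy', h00]

lemma hTd (k : ℕ) (t : ℝ) :
    HasDerivAt (fun x => arc x^(k+1)/((k+1).factorial : ℝ))
      (arc t^k/(k.factorial:ℝ) * gq t) t := by
  have h := ((hasDerivAt_arc t).pow (k+1)).div_const ((k+1).factorial : ℝ)
  refine h.congr_deriv ?_
  rw [show k+1-1 = k from rfl, Nat.factorial_succ]
  have hf : (k.factorial:ℝ) ≠ 0 := by positivity
  push_cast
  field_simp

lemma rec_shift (k : ℕ) {t : ℝ} (ht : |t| ≤ 5/4) :
    (1 + t^2/4) * S2 (k+2) t + (t/4) * S1 (k+2) t = S0 k t := by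
  rw [key_rec (k+2) ht]
  unfold S0
  refine tsum_congr fun n => ?_
  rw [centralt_rec n (k+2), if_pos (by omega : 2 ≤ k+2), show k+2-2 = k from rfl]
  unfold g0 cN
  ring

lemma rec_one {t : ℝ} (ht : |t| ≤ 5/4) :
    (1 + t^2/4) * S2 1 t + (t/4) * S1 1 t = 0 := by
  rw [key_rec 1 ht]
  have h : ∀ n:ℕ, ((centralt (n+2) 1 + (n:ℝ)^2/4 * centralt n 1) * t^n / n.factorial) = 0 :=
    fun n => by rw [centralt_rec n 1, if_neg (by omega)]; ring
  rw [tsum_congr h, tsum_zero]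

lemma S0_zero (k : ℕ) : S0 k 0 = centralt 0 k := by
  unfold S0
  rw [tsum_eq_single 0 ?_]
  · unfold g0 cN; simp
  · intro n hn
    unfold g0
    rw [zero_pow hn, mul_zero]

lemma S1_zero (k : ℕ) : S1 k 0 = centralt 1 k := by
  unfold S1
  rw [tsum_eq_single 1 ?_]
  · unfold g1 cN; simp
  · intro n hn
    match n, hn with
    | 0, _ => unfold g1; simp
    | (m+2), _ =>
      unfold g1
      rw [show m+2-1 = m+1 from rfl, zero_pow (Nat.succ_ne_zero m), mul_zero]

lemma gq_zero : gq 0 = 1 := by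
  unfold gq
  norm_num [Real.sqrt_one]

lemma main_eq : ∀ k : ℕ, ∀ t ∈ U, S0 k t = arc t ^ k / (k.factorial : ℝ)
  | 0 => by
    intro t htU
    have h1 : ∀ n:ℕ, n ≠ 0 → g0 0 n t = 0 := by
      intro n hn
      match n, hn with
      | (m+1), _ =>
        unfold g0 cN
        rw [centralt_n0 m]
        simp
    unfold S0
    rw [tsum_eq_single 0 h1]
    unfold g0 cN
    simp [centralt_00]
  | 1 => by
    intro t htU
    have h := ode_unique (y₁ := S0 1) (d₁ := S1 1) (e₁ := S2 1)
      (y₂ := fun x => arc x) (d₂ := gq)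
      (e₂ := fun x => -(x/4) * gq x^3)
      (fun x hx => hasDerivAt_S0 1 hx) (fun x hx => hasDerivAt_S1 1 hx)
      (fun x _ => hasDerivAt_arc x) (fun x _ => hasDerivAt_gq x)
      (fun x hx => by
        rw [rec_one (abs_le_of_mem_U hx)]
        linear_combination (x/4) * gq x * hgq2 x)
      (by show S0 1 0 = arc 0; rw [S0_zero, centralt_0succ 0, arc_zero])
      (by show S1 1 0 = gq 0; rw [S1_zero, centralt_11, gq_zero])
      t htU
    rw [h]
    simp [Nat.factorial_one]
  | (k+2) => by
    intro t htU
    have ih := main_eq k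
    have h := ode_unique (y₁ := S0 (k+2)) (d₁ := S1 (k+2)) (e₁ := S2 (k+2))
      (y₂ := fun x => arc x^(k+2)/((k+2).factorial:ℝ))
      (d₂ := fun x => arc x^(k+1)/((k+1).factorial:ℝ) * gq x)
      (e₂ := fun x => (arc x^k/(k.factorial:ℝ) * gq x) * gq x
        + arc x^(k+1)/((k+1).factorial:ℝ) * (-(x/4) * gq x^3))
      (fun x hx => hasDerivAt_S0 (k+2) hx) (fun x hx => hasDerivAt_S1 (k+2) hx)
      (fun x _ => hTd (k+1) x)
      (fun x _ => (hTd k x).mul (hasDerivAt_gq x))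
      (fun x hx => by
        rw [rec_shift k (abs_le_of_mem_U hx), ih x hx]
        linear_combination (arc x^(k+1)/((k+1).factorial:ℝ)*(x/4)*gq x
          - arc x^k/(k.factorial:ℝ)) * hgq2 x)
      (by
        show S0 (k+2) 0 = arc 0^(k+2)/((k+2).factorial:ℝ)
        rw [S0_zero, centralt_0succ (k+1), arc_zero, zero_pow (by omega : k+2 ≠ 0), zero_div])
      (by
        show S1 (k+2) 0 = arc 0^(k+1)/((k+1).factorial:ℝ) * gq 0
        rw [S1_zero, centralt_eq_zero_of_lt (by omega : 1 < k+2), arc_zero,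
          zero_pow (by omega : k+1 ≠ 0), zero_div, zero_mul])
      t htU
    exact h

/-- For a nonnegative integer `k` and a real `t` with `|t| < 1`:
`(1/k!) (2 log(t/2 + √(1 + t²/4)))^k = ∑_{n=k}^{∞} t(n,k) t^n / n!`,
the series converging to the left-hand side. -/
theorem hasSum_centralt (k : ℕ) (t : ℝ) (ht : |t| < 1) :
    HasSum (fun n : ℕ => centralt (n + k) k * t ^ (n + k) / (Nat.factorial (n + k) : ℝ))
      ((1 / (Nat.factorial k : ℝ)) *
        (2 * Real.log (t / 2 + Real.sqrt (1 + t ^ 2 / 4))) ^ k) := by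
  have ht54 : |t| ≤ 5/4 := le_of_lt (lt_trans ht (by norm_num))
  have htU : t ∈ U := by
    rcases abs_lt.mp ht with ⟨h1, h2⟩
    constructor <;> linarith
  have hmain : (∑' n, g0 k n t) = arc t ^ k / (k.factorial : ℝ) := main_eq k t htU
  have hsum : HasSum (fun n => g0 k n t) (arc t ^ k / (k.factorial : ℝ)) := by
    rw [← hmain]
    exact (summable_g0 k ht54).hasSum
  have hzero : ∀ i ∈ Finset.range k, g0 k i t = 0 := by
    intro i hi
    unfold g0 cN
    rw [centralt_eq_zero_of_lt (Finset.mem_range.mp hi)]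
    simp
  have h2 : HasSum (fun n => g0 k n t)
      (arc t ^ k / (k.factorial : ℝ) + ∑ i ∈ Finset.range k, g0 k i t) := by
    rw [Finset.sum_eq_zero hzero, add_zero]
    exact hsum
  have h3 := (hasSum_nat_add_iff (f := fun n => g0 k n t) k).mpr h2
  have hfun : (fun n => g0 k (n+k) t)
      = fun n : ℕ => centralt (n + k) k * t ^ (n + k) / (Nat.factorial (n + k) : ℝ) := by
    funext n
    unfold g0 cN
    ring
  rw [hfun] at h3
  have hval : (1 / (Nat.factorial k : ℝ)) *
      (2 * Real.log (t / 2 + Real.sqrt (1 + t ^ 2 / 4))) ^ k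
      = arc t ^ k / (k.factorial : ℝ) := by
    unfold arc
    ring
  rw [hval]
  exact h3
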